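/- arXiv:math/9908110 — 2 statements merged into one kernel-verified Lean document; each statement's English description precedes it below -/
import Mathlib

section
/- Let 1 ≤ d ≤ 5 and let A, B ∈ M_d(ℂ) be a simple representation of B_3 such that A is diagonalizable with pairwise distinct eigenvalues λ_1, …, λ_d. Then the d matrices T = {A·B·A·e_{B,1}} ∪ {e_{A,i}·e_{B,1} : 2 ≤ i ≤ d} are linearly independent over ℂ and form a basis of the left ideal M_d(ℂ)·e_{B,1} = {X·e_{B,1} : X ∈ M_d(ℂ)}; in particular this left ideal is a d-dimensional ℂ-vector space. -/
/-!
Let `Δ = A * B * A` be the Garside element. The braid relation gives `Δ * B = A * Δ` and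
`B * Δ = Δ * A`, so `Δ²` commutes with `A` and `B`; by simplicity it is a scalar `δ ≠ 0`, and
`B = Δ * A * Δ⁻¹`. With `A = P * Λ * P⁻¹` (`Λ = diagonal λ`), `W = Δ * P` and matrix units
`E_ij` this gives `e_{A,i} = P * E_ii * P⁻¹`, `e_{B,1} = W * E_11 * W⁻¹`,
`Δ * e_{B,1} = δ • P * E_11 * W⁻¹` and `e_{A,i} * e_{B,1} = G_i1 • P * E_i1 * W⁻¹`, where
`G = P⁻¹ * Δ * P = Λ * N * Λ` and `N = P⁻¹ * B * P`. The matrices `P * E_i1 * W⁻¹` form a basis of the left ideal, so everything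
comes down to the off-diagonal entries of `N` being nonzero.

Suppose `N_ij = 0` with `i ≠ j`. The identities `N Λ N = Λ N Λ`, `Λ (N Λ² N) Λ = δ` and
`Λ (N Λ³ N) Λ = δ N` say that `u_k = λ_k N_ik N_kj` satisfies `∑_k λ_k^p u_k = 0` for
`p = 0, 1, 2`. Only the `d - 2 ≤ 3` indices `k ≠ i, j` contribute, so by Vandermonde
`N_ik N_kj = 0` for every `k`. Hence the coordinates `k` with `k = j` or `N_kj ≠ 0` span a proper
subspace invariant under `Λ` and `N`, contradicting simplicity.
-/

open Matrix Polynomial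

/-- The eigenprojection `e_{M,i} = ∏_{j ≠ i} (M - λ_j·I)/(λ_i - λ_j)` of a matrix `M`
onto the `λ_i`-eigenspace. -/
noncomputable def eigProj {d : ℕ} (lam : Fin d → ℂ)
    (M : Matrix (Fin d) (Fin d) ℂ) (i : Fin d) : Matrix (Fin d) (Fin d) ℂ :=
  (∏ j ∈ Finset.univ.erase i, (lam i - lam j)⁻¹) •
    Polynomial.aeval M (∏ j ∈ Finset.univ.erase i, (X - C (lam j)))

section Braid

variable {M : Type*} [Monoid M] {a b : M}

theorem garside_mul_of_braid (h : a * b * a = b * a * b) : a * b * a * b = a * (a * b * a) := by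
  simp only [mul_assoc] at h ⊢; rw [h]

theorem mul_garside_of_braid (h : a * b * a = b * a * b) : b * (a * b * a) = a * b * a * a :=
  calc b * (a * b * a) = b * a * b * a := by simp only [mul_assoc]
    _ = a * b * a * a := by rw [h]

theorem commute_garside_sq_left (h : a * b * a = b * a * b) :
    Commute (a * b * a * (a * b * a)) a :=
  calc a * b * a * (a * b * a) * a = a * b * a * (b * (a * b * a)) := by
        rw [mul_garside_of_braid h]; simp only [mul_assoc]
    _ = a * (a * b * a * (a * b * a)) := by
        rw [← mul_assoc, garside_mul_of_braid h]; simp only [mul_assoc]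

theorem commute_garside_sq_right (h : a * b * a = b * a * b) :
    Commute (a * b * a * (a * b * a)) b :=
  calc a * b * a * (a * b * a) * b = a * b * a * (a * (a * b * a)) := by
        rw [mul_assoc, garside_mul_of_braid h]
    _ = b * (a * b * a * (a * b * a)) := by
        rw [← mul_assoc, ← mul_garside_of_braid h]; simp only [mul_assoc]

end Braid

theorem Finset.eq_zero_of_forall_sum_pow_mul_eq_zero {ι R : Type*} [CommRing R] [IsDomain R]
    [DecidableEq ι] {s : Finset ι} {x u : ι → R} (hx : Set.InjOn x s)
    (h : ∀ p < s.card, ∑ k ∈ s, x k ^ p * u k = 0) : ∀ a ∈ s, u a = 0 := by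
  intro a ha
  set q : R[X] := ∏ l ∈ s.erase a, (X - C (x l))
  have hdeg : q.natDegree < s.card := by
    rw [natDegree_finsetProd_X_sub_C_eq_card, card_erase_of_mem ha]
    exact Nat.sub_lt (card_pos.2 ⟨a, ha⟩) one_pos
  have hsum : ∑ k ∈ s, q.eval (x k) * u k = 0 := by
    simp only [eval_eq_sum_range, sum_mul, mul_assoc]
    rw [sum_comm]
    exact sum_eq_zero fun p hp => by
      rw [← mul_sum, h p (lt_of_lt_of_le (mem_range.1 hp) hdeg), mul_zero]
  rw [sum_eq_single_of_mem a ha fun k hk hka => by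
    rw [eval_prod, prod_eq_zero (mem_erase.2 ⟨hka, hk⟩) (by simp), zero_mul]] at hsum
  refine (mul_eq_zero.1 hsum).resolve_left ?_
  rw [eval_prod]
  refine prod_ne_zero_iff.2 fun l hl => ?_
  rw [eval_sub, eval_X, eval_C, sub_ne_zero]
  exact fun hxl => (mem_erase.1 hl).1 (hx (mem_of_mem_erase hl) ha hxl.symm)

theorem Submodule.span_range_smul_of_ne_zero {ι K V : Type*} [Field K] [AddCommGroup V]
    [Module K V] {c : ι → K} (hc : ∀ i, c i ≠ 0) (v : ι → V) :
    span K (Set.range fun i => c i • v i) = span K (Set.range v) := by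
  simp only [span_range_eq_iSup]
  exact iSup_congr fun i => span_singleton_smul_eq (hc i).isUnit _

theorem Algebra.adjoin_image_eq_top {R A B : Type*} [CommSemiring R] [Semiring A] [Semiring B]
    [Algebra R A] [Algebra R B] (φ : A ≃ₐ[R] B) {S : Set A} (hS : Algebra.adjoin R S = ⊤) :
    Algebra.adjoin R (φ '' S) = ⊤ := by
  have h := Algebra.adjoin_image R φ.toAlgHom S
  rwa [hS, Algebra.map_top, (AlgHom.range_eq_top _).2 φ.surjective, AlgEquiv.coe_toAlgHom] at h

namespace Matrix

variable {n R : Type*} [Fintype n] [DecidableEq n] [CommRing R]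

noncomputable def conjAlgEquiv {P : Matrix n n R} (hP : IsUnit P) :
    Matrix n n R ≃ₐ[R] Matrix n n R :=
  MulSemiringAction.toAlgEquiv R _ (ConjAct.toConjAct hP.unit)

theorem conjAlgEquiv_apply {P : Matrix n n R} (hP : IsUnit P) (X : Matrix n n R) :
    conjAlgEquiv hP X = P * X * P⁻¹ := by
  simp [conjAlgEquiv, ConjAct.units_smul_def, coe_units_inv]

theorem conjAlgEquiv_symm_apply {P : Matrix n n R} (hP : IsUnit P) (X : Matrix n n R) :
    (conjAlgEquiv hP).symm X = P⁻¹ * X * P := by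
  simp [conjAlgEquiv, ConjAct.units_smul_def, coe_units_inv]

theorem mul_diagonal_mul_apply (M M' : Matrix n n R) (w : n → R) (i j : n) :
    (M * diagonal w * M') i j = ∑ k, w k * (M i k * M' k j) := by
  rw [mul_apply]
  exact Finset.sum_congr rfl fun k _ => by rw [mul_diagonal]; ring

theorem diagonal_mul_mul_diagonal_apply (M : Matrix n n R) (v w : n → R) (i j : n) :
    (diagonal v * M * diagonal w) i j = v i * M i j * w j := by
  rw [mul_diagonal, diagonal_mul]

theorem mul_single_eq_sum (M : Matrix n n R) (z : n) :
    M * single z z 1 = ∑ k, M k z • single k z 1 := by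
  ext a b
  by_cases hb : b = z
  · subst hb; simp [sum_apply, single_apply]
  · simp [sum_apply, Ne.symm hb, mul_single_apply_of_ne (hbj := hb)]

theorem conj_single_mul_conj_single (U W : Matrix n n R) (i z : n) :
    U * single i i 1 * U⁻¹ * (W * single z z 1 * W⁻¹) =
      (U⁻¹ * W) i z • (U * single i z 1 * W⁻¹) := by
  calc U * single i i 1 * U⁻¹ * (W * single z z 1 * W⁻¹)
        = U * (single i i 1 * (U⁻¹ * W) * single z z 1) * W⁻¹ := by simp only [mul_assoc]
    _ = _ := by
      have hsingle : ∀ x : R, single i z x = x • single i z (1 : R) := fun x => by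
        rw [smul_single, smul_eq_mul, mul_one]
      rw [single_mul_mul_single, one_mul, mul_one, hsingle, mul_smul_comm, smul_mul_assoc]

theorem eq_garside_mul_mul_inv_of_braid {a b : Matrix n n R} (h : a * b * a = b * a * b)
    (hu : IsUnit (a * b * a)) : b = a * b * a * a * (a * b * a)⁻¹ := by
  rw [← mul_garside_of_braid h, mul_nonsing_inv_cancel_right _ _ ((isUnit_iff_isUnit_det _).1 hu)]

theorem exists_eq_smul_one_of_commute_of_adjoin_eq_top {S : Set (Matrix n n R)}
    (hS : Algebra.adjoin R S = ⊤) {X : Matrix n n R} (hX : ∀ s ∈ S, Commute X s) :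
    ∃ δ : R, X = δ • 1 := by
  have hle : Algebra.adjoin R S ≤ Subalgebra.centralizer R {X} :=
    Algebra.adjoin_le fun s hs => (Subalgebra.mem_centralizer_iff R).2 fun _ h =>
      Set.mem_singleton_iff.1 h ▸ hX s hs
  have hcentral : X ∈ Set.center (Matrix n n R) := Semigroup.mem_center_iff.2 fun Y =>
    ((Subalgebra.mem_centralizer_iff R).1 (hle (hS ▸ Algebra.mem_top : Y ∈ _)) X rfl).symm
  rw [center_eq_range] at hcentral
  obtain ⟨δ, rfl⟩ := hcentral
  exact ⟨δ, by rw [smul_one_eq_diagonal]; rfl⟩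

theorem garside_sq_eq_smul_one_of_adjoin_eq_top {a b : Matrix n n R} (h : a * b * a = b * a * b)
    (hadj : Algebra.adjoin R {a, b} = ⊤) : ∃ δ : R, a * b * a * (a * b * a) = δ • 1 :=
  exists_eq_smul_one_of_commute_of_adjoin_eq_top hadj <| by
    rintro s (rfl | rfl)
    exacts [commute_garside_sq_left h, commute_garside_sq_right h]

theorem const_of_blockTriangular_of_adjoin_eq_top [Nontrivial R] {α : Type*} [LinearOrder α]
    {S : Set (Matrix n n R)} (hS : Algebra.adjoin R S = ⊤) {b : n → α}
    (hb : ∀ s ∈ S, s.BlockTriangular b) (i j : n) : b i = b j := by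
  have hle : Algebra.adjoin R S ≤ blockTriangularSubalgebra R R b := Algebra.adjoin_le hb
  have hsingle : ∀ i j : n, ¬ b j < b i := fun i j hlt => by
    simpa using (hle (hS ▸ Algebra.mem_top) : (single i j (1 : R)).BlockTriangular b) hlt
  exact le_antisymm (not_lt.1 (hsingle i j)) (not_lt.1 (hsingle j i))

theorem linearIndependent_mul_single_mul {U V : Matrix n n R} (hU : IsUnit U) (hV : IsUnit V)
    (z : n) : LinearIndependent R fun i => U * single i z (1 : R) * V := by
  rw [Fintype.linearIndependent_iff]
  intro c hc i
  have h0 : U * (∑ k, c k • single k z (1 : R)) * V = U * 0 * V := by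
    rw [Finset.mul_sum, Finset.sum_mul, mul_zero, zero_mul, ← hc]
    simp only [mul_smul_comm, smul_mul_assoc]
  simpa [sum_apply, single_apply] using
    congrFun (congrFun (hU.mul_left_cancel (hV.mul_right_cancel h0)) i) z

theorem span_range_mul_single_mul {U W : Matrix n n R} (hU : IsUnit U) (hW : IsUnit W) (z : n) :
    Submodule.span R (Set.range fun i => U * single i z (1 : R) * W⁻¹) =
      Submodule.span R {Y | ∃ X, Y = X * (W * single z z 1 * W⁻¹)} := by
  have hU' : U * U⁻¹ = 1 := mul_nonsing_inv U ((isUnit_iff_isUnit_det U).1 hU)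
  have hW' : W⁻¹ * W = 1 := nonsing_inv_mul W ((isUnit_iff_isUnit_det W).1 hW)
  apply le_antisymm <;> rw [Submodule.span_le]
  · rintro _ ⟨i, rfl⟩
    refine Submodule.subset_span ⟨U * single i z 1 * W⁻¹, ?_⟩
    calc U * single i z 1 * W⁻¹ = U * (single i z 1 * single z z 1) * W⁻¹ := by
          rw [single_mul_single_same, one_mul]
      _ = U * single i z 1 * (W⁻¹ * W) * single z z 1 * W⁻¹ := by
          rw [hW', mul_one]; simp only [mul_assoc]
      _ = _ := by simp only [mul_assoc]
  · rintro _ ⟨X, rfl⟩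
    have hX : X * (W * single z z 1 * W⁻¹) = U * ((U⁻¹ * X * W) * single z z 1) * W⁻¹ := by
      simp only [← mul_assoc, hU', one_mul]
    rw [hX, mul_single_eq_sum, Finset.mul_sum, Finset.sum_mul]
    exact Submodule.sum_mem _ fun k _ => by
      rw [mul_smul_comm, smul_mul_assoc]
      exact Submodule.smul_mem _ _ (Submodule.subset_span ⟨k, rfl⟩)

section Domain

variable [IsDomain R]

variable {lam : n → R} {N : Matrix n n R}

theorem apply_mul_apply_eq_zero_of_braid (hcard : Fintype.card n ≤ 5)
    (hinj : Function.Injective lam) (hlam : ∀ k, lam k ≠ 0)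
    (hbraid : diagonal lam * N * diagonal lam = N * diagonal lam * N) {δ : R}
    (hδ : diagonal lam * N * diagonal lam * (diagonal lam * N * diagonal lam) = δ • 1)
    {i j : n} (hij : i ≠ j) (hN : N i j = 0) (k : n) : N i k * N k j = 0 := by
  set Λ := diagonal lam
  have hsandwich : ∀ X : Matrix n n R, (Λ * X * Λ) i j = 0 → X i j = 0 := fun X hX => by
    rw [diagonal_mul_mul_diagonal_apply] at hX
    simpa [hlam i, hlam j] using hX
  have hsq : Λ * (N * Λ ^ 2 * N) * Λ = δ • 1 := by rw [← hδ]; noncomm_ring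
  have hcube : Λ * (N * Λ ^ 3 * N) * Λ = δ • N :=
    calc Λ * (N * Λ ^ 3 * N) * Λ = Λ * N * Λ * (Λ * (Λ * N * Λ)) := by noncomm_ring
      _ = δ • N := by rw [← garside_mul_of_braid hbraid, ← mul_assoc, hδ, smul_one_mul]
  have hpow : ∀ p < 3, (N * Λ ^ (p + 1) * N) i j = 0 := by
    intro p hp
    interval_cases p
    · rw [pow_one, ← hbraid, diagonal_mul_mul_diagonal_apply, hN, mul_zero, zero_mul]
    · exact hsandwich _ (by rw [hsq, smul_apply, one_apply_ne hij, smul_zero])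
    · exact hsandwich _ (by rw [hcube, smul_apply, hN, smul_zero])
  set u : n → R := fun k => lam k * (N i k * N k j)
  set s : Finset n := Finset.univ \ {i, j}
  have hsupp : ∀ k ∉ s, u k = 0 := fun k hk => by
    simp only [s, Finset.mem_sdiff, Finset.mem_univ, true_and, not_not, Finset.mem_insert,
      Finset.mem_singleton] at hk
    rcases hk with rfl | rfl <;> simp [u, hN]
  have hsum : ∀ p < s.card, ∑ k ∈ s, lam k ^ p * u k = 0 := by
    intro p hp
    have hp3 : p < 3 := by
      have : s.card = Fintype.card n - 2 := by
        rw [Finset.card_sdiff_of_subset (Finset.subset_univ _), Finset.card_pair hij,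
          Finset.card_univ]
      omega
    rw [Finset.sum_subset (Finset.subset_univ s) fun k _ hk => by rw [hsupp k hk, mul_zero],
      ← hpow p hp3, diagonal_pow, mul_diagonal_mul_apply]
    exact Finset.sum_congr rfl fun k _ => by simp only [u, Pi.pow_apply]; ring
  by_cases hk : k ∈ s
  · simpa [u, hlam k] using Finset.eq_zero_of_forall_sum_pow_mul_eq_zero hinj.injOn hsum k hk
  · simpa [u, hlam k] using hsupp k hk

theorem apply_ne_zero_of_braid (hcard : Fintype.card n ≤ 5)
    (hinj : Function.Injective lam) (hlam : ∀ k, lam k ≠ 0)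
    (hbraid : diagonal lam * N * diagonal lam = N * diagonal lam * N)
    (hadj : Algebra.adjoin R {diagonal lam, N} = ⊤) {i j : n} (hij : i ≠ j) : N i j ≠ 0 := by
  intro hN
  obtain ⟨δ, hδ⟩ := garside_sq_eq_smul_one_of_adjoin_eq_top hbraid hadj
  -- `b k` holds off the invariant coordinate set `{j} ∪ {k | N k j ≠ 0}`
  let b : n → Prop := fun k => k ≠ j ∧ N k j = 0
  have hbN : N.BlockTriangular b := by
    intro k m hlt
    simp only [lt_iff_le_not_ge, le_Prop_eq, Classical.not_imp] at hlt
    obtain ⟨-, ⟨hkj, hNkj⟩, hm⟩ := hlt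
    by_cases hmj : m = j
    · rwa [hmj]
    · exact (mul_eq_zero.1 (apply_mul_apply_eq_zero_of_braid hcard hinj hlam hbraid hδ hkj hNkj
        m)).resolve_right fun h => hm ⟨hmj, h⟩
  have hb := const_of_blockTriangular_of_adjoin_eq_top hadj (b := b) (by
    rintro s (rfl | rfl)
    exacts [blockTriangular_diagonal _, hbN]) i j
  simp [b, hij, hN] at hb

theorem conj_garside_apply_ne_zero (hcard : Fintype.card n ≤ 5)
    (hinj : Function.Injective lam) {A B P : Matrix n n R} (hA : IsUnit A)
    (hbraid : A * B * A = B * A * B) (hsimple : Algebra.adjoin R {A, B} = ⊤) (hP : IsUnit P)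
    (hdiag : A = P * diagonal lam * P⁻¹) {i j : n} (hij : i ≠ j) :
    (P⁻¹ * (A * B * A) * P) i j ≠ 0 := by
  set φ := (conjAlgEquiv hP).symm
  have hΛ : φ A = diagonal lam := by
    rw [hdiag, ← conjAlgEquiv_apply hP, AlgEquiv.symm_apply_apply]
  have hlam : ∀ k, lam k ≠ 0 := fun k =>
    (Pi.isUnit_iff.1 (isUnit_diagonal.1 (hΛ ▸ hA.map φ)) k).ne_zero
  have hbraidΛ : diagonal lam * φ B * diagonal lam = φ B * diagonal lam * φ B := by
    simpa only [map_mul, hΛ] using congrArg φ hbraid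
  have hadjΛ : Algebra.adjoin R {diagonal lam, φ B} = ⊤ := by
    rw [← hΛ, ← Set.image_pair]
    exact Algebra.adjoin_image_eq_top φ hsimple
  rw [← conjAlgEquiv_symm_apply hP, map_mul, map_mul, hΛ, diagonal_mul_mul_diagonal_apply]
  exact mul_ne_zero (mul_ne_zero (hlam i)
    (apply_ne_zero_of_braid hcard hinj hlam hbraidΛ hadjΛ hij)) (hlam j)

end Domain

end Matrix

section EigProj

variable {d : ℕ} {lam : Fin d → ℂ}

theorem eigProj_eq_aeval_lagrange_basis (M : Matrix (Fin d) (Fin d) ℂ) (i : Fin d) :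
    eigProj lam M i = aeval M (Lagrange.basis Finset.univ lam i) := by
  rw [eigProj, Lagrange.basis]
  simp only [Lagrange.basisDivisor]
  rw [Finset.prod_mul_distrib, ← map_prod, ← smul_eq_C_mul, map_smul]

theorem eigProj_map {F : Type*} [FunLike F (Matrix (Fin d) (Fin d) ℂ) (Matrix (Fin d) (Fin d) ℂ)]
    [AlgHomClass F ℂ _ _] (φ : F) (M : Matrix (Fin d) (Fin d) ℂ) (i : Fin d) :
    eigProj lam (φ M) i = φ (eigProj lam M i) := by
  rw [eigProj, eigProj, aeval_algHom_apply, map_smul]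

theorem eigProj_conj {P : Matrix (Fin d) (Fin d) ℂ} (hP : IsUnit P) (M : Matrix (Fin d) (Fin d) ℂ)
    (i : Fin d) : eigProj lam (P * M * P⁻¹) i = P * eigProj lam M i * P⁻¹ := by
  rw [← conjAlgEquiv_apply hP, eigProj_map, conjAlgEquiv_apply]

theorem eigProj_diagonal (hinj : Function.Injective lam) (i : Fin d) :
    eigProj lam (diagonal lam) i = single i i 1 := by
  rw [eigProj_eq_aeval_lagrange_basis, show diagonal lam = diagonalAlgHom ℂ lam from rfl,
    aeval_algHom_apply, aeval_pi_apply, diagonalAlgHom_apply]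
  ext a b
  by_cases hab : a = b
  · subst hab
    by_cases hai : a = i
    · subst hai; simp [Lagrange.eval_basis_self hinj.injOn]
    · simp [Lagrange.eval_basis_of_ne (Ne.symm hai), Ne.symm hai]
  · rw [diagonal_apply_ne _ hab, single_apply_of_ne]
    grind

theorem eigProj_of_braid (hinj : Function.Injective lam) {A B P : Matrix (Fin d) (Fin d) ℂ}
    (hbraid : A * B * A = B * A * B) (hC : IsUnit (A * B * A)) (hP : IsUnit P)
    (hdiag : A = P * diagonal lam * P⁻¹) (i : Fin d) :
    eigProj lam B i = A * B * A * P * single i i 1 * (A * B * A * P)⁻¹ := by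
  have hB : B = A * B * A * P * diagonal lam * (A * B * A * P)⁻¹ :=
    calc B = A * B * A * A * (A * B * A)⁻¹ := eq_garside_mul_mul_inv_of_braid hbraid hC
      _ = A * B * A * (P * diagonal lam * P⁻¹) * (A * B * A)⁻¹ := by rw [← hdiag]
      _ = _ := by rw [Matrix.mul_inv_rev (A * B * A) P]; simp only [mul_assoc]
  conv_lhs => rw [hB]
  rw [eigProj_conj (hC.mul hP), eigProj_diagonal hinj]

end EigProj

/-- the `d` matrices `A·B·A·e_{B,1}` and `e_{A,i}·e_{B,1}` (`2 ≤ i ≤ d`) are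
linearly independent and form a basis of the left ideal `M_d(ℂ)·e_{B,1}`, which is therefore a
`d`-dimensional ℂ-vector space. -/
theorem basis_of_left_ideal {d : ℕ} (hd : 1 ≤ d) (hd5 : d ≤ 5)
    (A B : Matrix (Fin d) (Fin d) ℂ)
    (hA : IsUnit A) (hB : IsUnit B)
    (hbraid : A * B * A = B * A * B)
    (hsimple : Algebra.adjoin ℂ ({A, B} : Set (Matrix (Fin d) (Fin d) ℂ)) = ⊤)
    (lam : Fin d → ℂ) (hinj : Function.Injective lam)
    (P : Matrix (Fin d) (Fin d) ℂ) (hP : IsUnit P)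
    (hdiag : A = P * Matrix.diagonal lam * P⁻¹) :
    LinearIndependent ℂ (fun i : Fin d =>
      if i = (⟨0, hd⟩ : Fin d) then A * B * A * eigProj lam B ⟨0, hd⟩
      else eigProj lam A i * eigProj lam B ⟨0, hd⟩) ∧
    Submodule.span ℂ (Set.range (fun i : Fin d =>
      if i = (⟨0, hd⟩ : Fin d) then A * B * A * eigProj lam B ⟨0, hd⟩
      else eigProj lam A i * eigProj lam B ⟨0, hd⟩))
      = Submodule.span ℂ {Y : Matrix (Fin d) (Fin d) ℂ |
          ∃ X : Matrix (Fin d) (Fin d) ℂ, Y = X * eigProj lam B ⟨0, hd⟩} ∧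
    Module.finrank ℂ ↥(Submodule.span ℂ {Y : Matrix (Fin d) (Fin d) ℂ |
          ∃ X : Matrix (Fin d) (Fin d) ℂ, Y = X * eigProj lam B ⟨0, hd⟩}) = d := by
  set z : Fin d := ⟨0, hd⟩
  have : Nonempty (Fin d) := ⟨z⟩
  have hC : IsUnit (A * B * A) := (hA.mul hB).mul hA
  have hW : IsUnit (A * B * A * P) := hC.mul hP
  obtain ⟨δ, hδ⟩ := garside_sq_eq_smul_one_of_adjoin_eq_top hbraid hsimple
  have hδ0 : δ ≠ 0 := by rintro rfl; simpa [hδ] using hC.mul hC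
  have heB := eigProj_of_braid hinj hbraid hC hP hdiag z
  set c : Fin d → ℂ := fun i => if i = z then δ else (P⁻¹ * (A * B * A) * P) i z
  have hc : ∀ i, c i ≠ 0 := fun i => by
    by_cases hi : i = z
    · simpa [c, hi] using hδ0
    · simpa [c, hi] using conj_garside_apply_ne_zero (by simpa) hinj hA hbraid hsimple hP hdiag hi
  have hfam : (fun i => if i = z then A * B * A * eigProj lam B z
      else eigProj lam A i * eigProj lam B z) =
      fun i => c i • (P * single i z 1 * (A * B * A * P)⁻¹) := by
    funext i
    by_cases hi : i = z
    · subst hi; simp only [c, if_pos, heB, ← mul_assoc, hδ, smul_mul_assoc, one_mul]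
    · rw [if_neg hi, heB, hdiag, eigProj_conj hP, eigProj_diagonal hinj, ← hdiag,
        conj_single_mul_conj_single]
      simp only [c, if_neg hi, mul_assoc]
  have hli := linearIndependent_mul_single_mul hP (isUnit_nonsing_inv_iff.2 hW) z
  rw [hfam, Submodule.span_range_smul_of_ne_zero hc, heB, ← span_range_mul_single_mul hP hW]
  exact ⟨hli.units_smul fun i => Units.mk0 _ (hc i), rfl, by
    rw [finrank_span_eq_card hli, Fintype.card_fin]⟩
end

section
/- Let A, B be unitary d×d complex matrices satisfying A·B·A = B·A·B, and assume A has pairwise distinct eigenvalues λ_1, …, λ_d. Then for every i the scalar μ_{1i} is a nonnegative real number. -/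
/-!
A unitary matrix has its eigenvalues on the unit circle, so if `U = P diag(λ) P⁻¹` then
`Uᴴ = U⁻¹ = P diag(conj λ) P⁻¹`. As `e_{U,i}ᴴ` is the eigenprojection of `Uᴴ` for `conj λ`, it
equals `e_{U,i}`: eigenprojections of unitary matrices are orthogonal projections. The braid
relation gives `B = (A B) A (A B)⁻¹`, so `B` is diagonalized with the same `λ` and each `e_{B,i}`
has trace one. Taking traces in `E F E = μ E` for `E = e_{B,1}`, `F = e_{A,i}` then gives
`μ = tr ((F E)ᴴ (F E)) ≥ 0`.
-/

open Matrix Polynomial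

namespace Matrix

section CommRing

variable {n R : Type*} [Fintype n] [DecidableEq n] [CommRing R]

theorem aeval_diagonal (v : n → R) (p : R[X]) :
    aeval (diagonal v) p = diagonal fun k => p.eval (v k) := by
  rw [← diagonalAlgHom_apply (R := R), aeval_algHom_apply, aeval_pi_apply, diagonalAlgHom_apply]
  simp

theorem aeval_conj {P : Matrix n n R} (hP : IsUnit P) (M : Matrix n n R) (p : R[X]) :
    aeval (P * M * P⁻¹) p = P * aeval M p * P⁻¹ := by
  have h := aeval_algEquiv (MulSemiringAction.toAlgEquiv R _ (ConjAct.toConjAct hP.unit)) M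
  have hconj :
      ∀ N, MulSemiringAction.toAlgEquiv R _ (ConjAct.toConjAct hP.unit) N = P * N * P⁻¹ := by
    intro N
    simp [ConjAct.units_smul_def, Matrix.coe_units_inv]
  simpa [hconj] using congrArg (· p) h

theorem conj_mul_conj {P : Matrix n n R} (hP : IsUnit P) (M N : Matrix n n R) :
    P * M * P⁻¹ * (P * N * P⁻¹) = P * (M * N) * P⁻¹ := by
  have hdet := (isUnit_iff_isUnit_det P).mp hP
  simp only [Matrix.mul_assoc, nonsing_inv_mul_cancel_left P _ hdet]

theorem conjTranspose_aeval [StarRing R] (M : Matrix n n R) (p : R[X]) :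
    (aeval M p)ᴴ = aeval Mᴴ (p.map (starRingEnd R)) := by
  induction p using Polynomial.induction_on' with
  | add p q hp hq => rw [map_add, conjTranspose_add, hp, hq, Polynomial.map_add, map_add]
  | monomial k a =>
    simp [aeval_monomial, Algebra.algebraMap_eq_smul_one, conjTranspose_pow, starRingEnd_apply]

theorem eq_conj_of_braid {A B : Matrix n n R} (hA : IsUnit A) (hB : IsUnit B)
    (h : A * B * A = B * A * B) : B = A * B * A * (A * B)⁻¹ := by
  rw [h, mul_inv_rev, ← Matrix.mul_assoc,
    mul_nonsing_inv_cancel_right B _ ((isUnit_iff_isUnit_det B).mp hB),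
    mul_nonsing_inv_cancel_right A _ ((isUnit_iff_isUnit_det A).mp hA)]

end CommRing

section RCLike

open scoped ComplexOrder

variable {n 𝕜 : Type*} [Fintype n] [RCLike 𝕜]

theorem IsHermitian.nonneg_of_mul_mul_eq_smul {E F : Matrix n n 𝕜} (hE : E.IsHermitian)
    (hF : F.IsHermitian) (hF2 : IsIdempotentElem F) (htr : E.trace = 1) {c : 𝕜}
    (h : E * F * E = c • E) : 0 ≤ c := by
  have hsq : E * F * E = (F * E)ᴴ * (F * E) := by
    rw [conjTranspose_mul, hE.eq, hF.eq, ← Matrix.mul_assoc, Matrix.mul_assoc E F F, hF2.eq]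
  calc c = (c • E).trace := by rw [trace_smul, htr, smul_eq_mul, mul_one]
    _ = ((F * E)ᴴ * (F * E)).trace := by rw [← h, hsq]
    _ ≥ 0 := (posSemidef_conjTranspose_mul_self _).trace_nonneg

variable [DecidableEq n]

theorem star_mul_self_eq_one_of_mulVec_eq_smul {U : Matrix n n 𝕜} (hU : U ∈ unitaryGroup n 𝕜)
    {v : n → 𝕜} (hv : v ≠ 0) {c : 𝕜} (h : U *ᵥ v = c • v) : star c * c = 1 := by
  have hnorm : star (U *ᵥ v) ⬝ᵥ (U *ᵥ v) = star v ⬝ᵥ v := by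
    rw [star_mulVec, dotProduct_mulVec, vecMul_vecMul, ← star_eq_conjTranspose,
      (mem_unitaryGroup_iff').mp hU, vecMul_one]
  rw [h, star_smul, smul_dotProduct, dotProduct_smul, smul_smul, smul_eq_mul] at hnorm
  exact mul_right_cancel₀ (mt dotProduct_star_self_eq_zero.mp hv) (hnorm.trans (one_mul _).symm)

theorem star_mul_self_eq_one_of_eq_conj_diagonal {U P : Matrix n n 𝕜}
    (hU : U ∈ unitaryGroup n 𝕜) (hP : IsUnit P) {v : n → 𝕜} (h : U = P * diagonal v * P⁻¹)
    (j : n) : star (v j) * v j = 1 := by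
  have hUP : U * P = P * diagonal v := by
    rw [h, nonsing_inv_mul_cancel_right P _ ((isUnit_iff_isUnit_det P).mp hP)]
  refine star_mul_self_eq_one_of_mulVec_eq_smul hU (v := P *ᵥ Pi.single j 1) ?_ ?_
  · intro h0
    have hsingle := (mulVec_injective_iff_isUnit.mpr hP) (h0.trans (mulVec_zero P).symm)
    simp at hsingle
  · rw [mulVec_mulVec, hUP, ← mulVec_mulVec, mulVec_single_one, ← mulVec_smul]
    congr 1
    ext k
    by_cases hk : k = j <;> simp [diagonal, hk]

theorem conjTranspose_eq_conj_diagonal_star {U P : Matrix n n 𝕜}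
    (hU : U ∈ unitaryGroup n 𝕜) (hP : IsUnit P) {v : n → 𝕜} (h : U = P * diagonal v * P⁻¹) :
    Uᴴ = P * diagonal (star v) * P⁻¹ := by
  refine left_inv_eq_right_inv (mem_unitaryGroup_iff'.mp hU) ?_
  have hv : diagonal v * diagonal (star v) = 1 := by
    rw [diagonal_mul_diagonal, ← diagonal_one]
    congr
    funext j
    simpa [mul_comm] using star_mul_self_eq_one_of_eq_conj_diagonal hU hP h j
  rw [h, conj_mul_conj hP, hv, Matrix.mul_one,
    mul_nonsing_inv P ((isUnit_iff_isUnit_det P).mp hP)]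

end RCLike

end Matrix

section eigProj

variable {d : ℕ}

theorem eigProj_eq_aeval_basis (lam : Fin d → ℂ) (M : Matrix (Fin d) (Fin d) ℂ) (i : Fin d) :
    eigProj lam M i = aeval M (Lagrange.basis Finset.univ lam i) := by
  simp [eigProj, Lagrange.basis, Lagrange.basisDivisor, Finset.prod_mul_distrib, ← map_prod,
    Algebra.smul_def]

theorem conjTranspose_eigProj (lam : Fin d → ℂ) (M : Matrix (Fin d) (Fin d) ℂ) (i : Fin d) :
    (eigProj lam M i)ᴴ = eigProj (star lam) Mᴴ i := by
  simp [eigProj_eq_aeval_basis, conjTranspose_aeval, Lagrange.basis, Lagrange.basisDivisor,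
    Polynomial.map_prod]

variable {lam : Fin d → ℂ} {M P : Matrix (Fin d) (Fin d) ℂ}

theorem eigProj_of_eq_conj_diagonal (hinj : Function.Injective lam) (hP : IsUnit P)
    (h : M = P * diagonal lam * P⁻¹) (i : Fin d) :
    eigProj lam M i = P * diagonal (Pi.single i 1) * P⁻¹ := by
  rw [h, eigProj_eq_aeval_basis, aeval_conj hP, aeval_diagonal]
  congr
  funext k
  rcases eq_or_ne k i with rfl | hk
  · simp [Lagrange.eval_basis_self hinj.injOn]
  · simp [Lagrange.eval_basis_of_ne hk.symm, hk]

theorem isIdempotentElem_eigProj (hinj : Function.Injective lam) (hP : IsUnit P)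
    (h : M = P * diagonal lam * P⁻¹) (i : Fin d) : IsIdempotentElem (eigProj lam M i) := by
  rw [eigProj_of_eq_conj_diagonal hinj hP h, IsIdempotentElem, conj_mul_conj hP,
    diagonal_mul_diagonal']
  congr
  funext k
  simp only [Pi.single_apply]
  split_ifs <;> simp

theorem trace_eigProj (hinj : Function.Injective lam) (hP : IsUnit P)
    (h : M = P * diagonal lam * P⁻¹) (i : Fin d) : (eigProj lam M i).trace = 1 := by
  rw [eigProj_of_eq_conj_diagonal hinj hP h, trace_conj hP, trace_diagonal, Finset.sum_pi_single']
  simp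

theorem isHermitian_eigProj (hM : M ∈ unitaryGroup (Fin d) ℂ) (hinj : Function.Injective lam)
    (hP : IsUnit P) (h : M = P * diagonal lam * P⁻¹) (i : Fin d) :
    (eigProj lam M i).IsHermitian := by
  rw [IsHermitian, conjTranspose_eigProj,
    eigProj_of_eq_conj_diagonal (lam := star lam) (star_injective.comp hinj) hP
      (conjTranspose_eq_conj_diagonal_star hM hP h),
    eigProj_of_eq_conj_diagonal hinj hP h]

end eigProj

/-- if `A` and `B` are unitary matrices satisfying the braid relation and `A`
has pairwise distinct eigenvalues, then every scalar `μ_{1i}` is a nonnegative real. -/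
theorem mu_nonneg_of_unitary {d : ℕ} (hd : 1 ≤ d)
    (A B : Matrix (Fin d) (Fin d) ℂ)
    (hAu : A ∈ Matrix.unitaryGroup (Fin d) ℂ)
    (hBu : B ∈ Matrix.unitaryGroup (Fin d) ℂ)
    (hbraid : A * B * A = B * A * B)
    (lam : Fin d → ℂ) (hinj : Function.Injective lam)
    (P : Matrix (Fin d) (Fin d) ℂ) (hP : IsUnit P)
    (hdiag : A = P * Matrix.diagonal lam * P⁻¹)
    (μ : Fin d → Fin d → ℂ)
    (hμ : ∀ i j, eigProj lam B i * eigProj lam A j * eigProj lam B i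
        = μ i j • eigProj lam B i) :
    ∀ i, ∃ r : ℝ, 0 ≤ r ∧ μ (⟨0, hd⟩ : Fin d) i = (r : ℂ) := by
  intro i
  have hA : IsUnit A := Unitary.isUnit_coe (U := ⟨A, hAu⟩)
  have hB : IsUnit B := Unitary.isUnit_coe (U := ⟨B, hBu⟩)
  have hQ : IsUnit (A * B * P) := (hA.mul hB).mul hP
  have hBdiag : B = A * B * P * diagonal lam * (A * B * P)⁻¹ :=
    calc B = A * B * A * (A * B)⁻¹ := eq_conj_of_braid hA hB hbraid
      _ = A * B * (P * diagonal lam * P⁻¹) * (A * B)⁻¹ := by rw [← hdiag]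
      _ = A * B * P * diagonal lam * (A * B * P)⁻¹ := by
        rw [mul_inv_rev (A * B)]; simp only [Matrix.mul_assoc]
  obtain ⟨r, hr, hμr⟩ := RCLike.nonneg_iff_exists_ofReal.mp <|
    IsHermitian.nonneg_of_mul_mul_eq_smul (isHermitian_eigProj hBu hinj hQ hBdiag _)
      (isHermitian_eigProj hAu hinj hP hdiag i) (isIdempotentElem_eigProj hinj hP hdiag i)
      (trace_eigProj hinj hQ hBdiag _) (hμ ⟨0, hd⟩ i)
  exact ⟨r, hr, hμr.symm⟩
end
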